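/- Consider a two-level hierarchy with parent count N > 0 and children N₁,…,N_k ≥ 0 summing to N (k ≥ 1). Suppose (ε₁, ε₂) with ε₁, ε₂ > 0 minimizes f(ε₁, N) + Σᵢ f(ε₂, Nᵢ) subject to ε₁ + ε₂ = ε_total, where f(ε, M) = (1/ε²)(2 − e^{−εM}) − (M/ε)e^{−εM}. Then ε₁ ≤ ε₂. -/

import Mathlib

open Real Finset

/-- MSE of the non-negativity post-processed Laplace mechanism with count `M`
and privacy budget `ε`. -/
noncomputable def fMSE (ε M : ℝ) : ℝ :=
  1 / ε ^ 2 * (2 - Real.exp (-ε * M)) - M / ε * Real.exp (-ε * M)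

/-!
Suppose `ε₂ < ε₁` and put `D = 1/ε₁² - 1/ε₂² < 0`. Since `-4/ε³ ≤ ∂f/∂ε ≤ -2/ε³`, the function
`ε ↦ f(ε, M) - 1/ε²` is antitone and `ε ↦ f(ε, M) - 2/ε²` is monotone, so
`2D ≤ f(ε₁, M) - f(ε₂, M) ≤ D` for every count `M ≥ 0`. Hence swapping the two budgets does not
increase the objective: with one child nothing changes, and with `k ≥ 2` children their total
change is at most `kD ≤ 2D`, which the parent's change dominates. By strict convexity of `f` in
`ε`, the equal split `ε_total/2` is then strictly better than the average of the allocation and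
its swap, contradicting optimality.
-/

theorem fMSE_eq_div (ε M : ℝ) : fMSE ε M = (2 - (1 + ε * M) * exp (-(ε * M))) / ε ^ 2 := by
  rcases eq_or_ne ε 0 with rfl | hε
  · simp [fMSE]
  · rw [fMSE, neg_mul]
    field_simp
    ring

noncomputable def fMSEDeriv (ε M : ℝ) : ℝ :=
  (exp (-(ε * M)) * ((ε * M) ^ 2 + 2 * (ε * M) + 2) - 4) / ε ^ 3

theorem hasDerivAt_exp_neg_mul (M ε : ℝ) :
    HasDerivAt (fun e => exp (-(e * M))) (-(M * exp (-(ε * M)))) ε := by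
  simpa [mul_comm] using ((hasDerivAt_mul_const M).neg (x := ε)).exp

theorem hasDerivAt_fMSE (M : ℝ) {ε : ℝ} (hε : ε ≠ 0) :
    HasDerivAt (fun e => fMSE e M) (fMSEDeriv ε M) ε := by
  have hfactor : HasDerivAt (fun e => 1 + e * M) M ε := by
    simpa using (hasDerivAt_mul_const M).const_add 1
  have hnum := (hfactor.fun_mul (hasDerivAt_exp_neg_mul M ε)).const_sub 2
  simp only [fMSE_eq_div]
  refine (hnum.div (hasDerivAt_pow 2 ε) (pow_ne_zero 2 hε)).congr_deriv ?_
  unfold fMSEDeriv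
  field_simp
  ring

theorem hasDerivAt_fMSEDeriv (M : ℝ) {ε : ℝ} (hε : ε ≠ 0) :
    HasDerivAt (fun e => fMSEDeriv e M)
      ((12 - exp (-(ε * M)) * ((ε * M) ^ 3 + 3 * (ε * M) ^ 2 + 6 * (ε * M) + 6)) / ε ^ 4) ε := by
  have hlin : HasDerivAt (fun e => e * M) M ε := hasDerivAt_mul_const M
  have hpoly := ((hlin.fun_pow 2).fun_add (hlin.const_mul 2)).add_const 2
  have hnum := ((hasDerivAt_exp_neg_mul M ε).fun_mul hpoly).sub_const 4
  refine (hnum.div (hasDerivAt_pow 3 ε) (pow_ne_zero 3 hε)).congr_deriv ?_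
  field_simp
  ring

theorem exp_neg_mul_quadratic_le {t : ℝ} (ht : 0 ≤ t) : exp (-t) * (t ^ 2 + 2 * t + 2) ≤ 2 := by
  have h := sum_le_exp_of_nonneg ht 3
  simp only [sum_range_succ, sum_range_zero] at h
  rw [exp_neg, inv_mul_le_iff₀ (exp_pos t)]
  norm_num [Nat.factorial] at h
  linarith

theorem exp_neg_mul_cubic_le {t : ℝ} (ht : 0 ≤ t) :
    exp (-t) * (t ^ 3 + 3 * t ^ 2 + 6 * t + 6) ≤ 6 := by
  have h := sum_le_exp_of_nonneg ht 4
  simp only [sum_range_succ, sum_range_zero] at h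
  rw [exp_neg, inv_mul_le_iff₀ (exp_pos t)]
  norm_num [Nat.factorial] at h
  linarith

theorem neg_four_div_le_fMSEDeriv (M : ℝ) {ε : ℝ} (hε : 0 < ε) : -4 / ε ^ 3 ≤ fMSEDeriv ε M := by
  have hquad : 0 ≤ exp (-(ε * M)) * ((ε * M) ^ 2 + 2 * (ε * M) + 2) :=
    mul_nonneg (exp_pos _).le (by nlinarith [sq_nonneg (ε * M + 1)])
  exact div_le_div_of_nonneg_right (by linarith) (by positivity)

theorem fMSEDeriv_le_neg_two_div {M ε : ℝ} (hM : 0 ≤ M) (hε : 0 < ε) :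
    fMSEDeriv ε M ≤ -2 / ε ^ 3 :=
  div_le_div_of_nonneg_right
    (by linarith [exp_neg_mul_quadratic_le (mul_nonneg hε.le hM)]) (by positivity)

theorem strictMonoOn_fMSEDeriv {M : ℝ} (hM : 0 ≤ M) :
    StrictMonoOn (fun e => fMSEDeriv e M) (Set.Ioi 0) := by
  have hderiv := fun x (hx : x ∈ Set.Ioi (0 : ℝ)) => hasDerivAt_fMSEDeriv M (ne_of_gt hx)
  refine strictMonoOn_of_hasDerivWithinAt_pos (convex_Ioi 0)
    (HasDerivAt.continuousOn hderiv) (by simpa using fun x hx => (hderiv x hx).hasDerivWithinAt)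
    (fun x hx => ?_)
  rw [interior_Ioi] at hx
  have hcubic := exp_neg_mul_cubic_le (mul_nonneg hx.le hM)
  exact div_pos (by linarith) (pow_pos hx 4)

theorem strictConvexOn_fMSE {M : ℝ} (hM : 0 ≤ M) :
    StrictConvexOn ℝ (Set.Ioi 0) (fun e => fMSE e M) := by
  have hderiv := fun x (hx : x ∈ Set.Ioi (0 : ℝ)) => hasDerivAt_fMSE M (ne_of_gt hx)
  refine StrictMonoOn.strictConvexOn_of_deriv (convex_Ioi 0) (HasDerivAt.continuousOn hderiv) ?_
  rw [interior_Ioi]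
  exact (strictMonoOn_fMSEDeriv hM).congr fun x hx => (hderiv x hx).deriv.symm

theorem hasDerivAt_fMSE_sub_div_sq (M c : ℝ) {ε : ℝ} (hε : ε ≠ 0) :
    HasDerivAt (fun e => fMSE e M - c / e ^ 2) (fMSEDeriv ε M + 2 * c / ε ^ 3) ε := by
  refine ((hasDerivAt_fMSE M hε).sub
    ((hasDerivAt_const ε c).div (hasDerivAt_pow 2 ε) (pow_ne_zero 2 hε))).congr_deriv ?_
  field_simp
  ring

theorem fMSE_sub_fMSE_le {M a b : ℝ} (hM : 0 ≤ M) (hb : 0 < b) (hba : b ≤ a) :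
    fMSE a M - fMSE b M ≤ 1 / a ^ 2 - 1 / b ^ 2 := by
  have hderiv := fun x (hx : x ∈ Set.Ioi (0 : ℝ)) => hasDerivAt_fMSE_sub_div_sq M 1 (ne_of_gt hx)
  have hanti := antitoneOn_of_hasDerivWithinAt_nonpos (convex_Ioi 0)
    (HasDerivAt.continuousOn hderiv) (by simpa using fun x hx => (hderiv x hx).hasDerivWithinAt)
    (fun x hx => by
      rw [interior_Ioi] at hx
      linear_combination fMSEDeriv_le_neg_two_div hM hx)
  linarith [hanti (Set.mem_Ioi.2 hb) (Set.mem_Ioi.2 (hb.trans_le hba)) hba]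

theorem two_div_sq_sub_le_fMSE_sub_fMSE (M : ℝ) {a b : ℝ} (hb : 0 < b) (hba : b ≤ a) :
    2 / a ^ 2 - 2 / b ^ 2 ≤ fMSE a M - fMSE b M := by
  have hderiv := fun x (hx : x ∈ Set.Ioi (0 : ℝ)) => hasDerivAt_fMSE_sub_div_sq M 2 (ne_of_gt hx)
  have hmono := monotoneOn_of_hasDerivWithinAt_nonneg (convex_Ioi 0)
    (HasDerivAt.continuousOn hderiv) (by simpa using fun x hx => (hderiv x hx).hasDerivWithinAt)
    (fun x hx => by
      rw [interior_Ioi] at hx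
      linear_combination neg_four_div_le_fMSEDeriv M hx)
  linarith [hmono (Set.mem_Ioi.2 hb) (Set.mem_Ioi.2 (hb.trans_le hba)) hba]

theorem fMSE_add_div_two_lt {M a b : ℝ} (hM : 0 ≤ M) (ha : 0 < a) (hb : 0 < b) (hab : a ≠ b) :
    fMSE ((a + b) / 2) M < (fMSE a M + fMSE b M) / 2 := by
  have h := (strictConvexOn_fMSE hM).2 ha hb hab one_half_pos one_half_pos (add_halves 1)
  simp only [smul_eq_mul, one_div_mul_eq_div, ← add_div] at h
  exact h

theorem sum_fMSE_sub_fMSE_le {ι : Type*} {s : Finset ι} (hs : s.Nonempty) {n : ι → ℝ}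
    (hn : ∀ i ∈ s, 0 ≤ n i) {a b : ℝ} (hb : 0 < b) (hba : b ≤ a) :
    ∑ i ∈ s, (fMSE a (n i) - fMSE b (n i)) ≤ fMSE a (∑ i ∈ s, n i) - fMSE b (∑ i ∈ s, n i) := by
  obtain ⟨i, rfl⟩ | hs := hs.exists_eq_singleton_or_nontrivial
  · simp
  have hcard : (2 : ℝ) ≤ #s := by exact_mod_cast (one_lt_card_iff_nontrivial.2 hs)
  have hgap : 1 / a ^ 2 - 1 / b ^ 2 ≤ 0 :=
    sub_nonpos.2 (one_div_le_one_div_of_le (pow_pos hb 2) (pow_le_pow_left₀ hb.le hba 2))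
  calc ∑ i ∈ s, (fMSE a (n i) - fMSE b (n i))
      ≤ ∑ i ∈ s, (1 / a ^ 2 - 1 / b ^ 2) := sum_le_sum fun i hi => fMSE_sub_fMSE_le (hn i hi) hb hba
    _ = #s * (1 / a ^ 2 - 1 / b ^ 2) := by rw [sum_const, nsmul_eq_mul]
    _ ≤ 2 * (1 / a ^ 2 - 1 / b ^ 2) := mul_le_mul_of_nonpos_right hcard hgap
    _ = 2 / a ^ 2 - 2 / b ^ 2 := by ring
    _ ≤ _ := two_div_sq_sub_le_fMSE_sub_fMSE _ hb hba

theorem optimal_allocation_bottom_heavy_general (N : ℝ) (k : ℕ) (hk : 1 ≤ k)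
    (Ni : Fin k → ℝ) (hNi : ∀ i, 0 ≤ Ni i) (hsum : ∑ i, Ni i = N)
    (εTotal ε₁ ε₂ : ℝ) (hε₁ : 0 < ε₁) (hε₂ : 0 < ε₂) (hbudget : ε₁ + ε₂ = εTotal)
    (hopt : ∀ ε₁' ε₂' : ℝ, 0 < ε₁' → 0 < ε₂' → ε₁' + ε₂' = εTotal →
      fMSE ε₁ N + ∑ i, fMSE ε₂ (Ni i) ≤ fMSE ε₁' N + ∑ i, fMSE ε₂' (Ni i)) :
    ε₁ ≤ ε₂ := by
  by_contra! hlt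
  subst hsum hbudget
  have hmid := fun {M : ℝ} (hM : 0 ≤ M) => fMSE_add_div_two_lt hM hε₁ hε₂ hlt.ne'
  have hparent := hmid (sum_nonneg fun i (_ : i ∈ univ) => hNi i)
  have hchildren : ∑ i, fMSE ((ε₁ + ε₂) / 2) (Ni i) ≤ ∑ i, (fMSE ε₁ (Ni i) + fMSE ε₂ (Ni i)) / 2 :=
    sum_le_sum fun i _ => (hmid (hNi i)).le
  have hswap := sum_fMSE_sub_fMSE_le (univ_nonempty_iff.2 ⟨⟨0, hk⟩⟩) (fun i _ => hNi i) hε₂ hlt.le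
  have hsplit := hopt ((ε₁ + ε₂) / 2) ((ε₁ + ε₂) / 2) (by positivity) (by positivity) (add_halves _)
  rw [← sum_div, sum_add_distrib] at hchildren
  rw [sum_sub_distrib] at hswap
  linarith

theorem optimal_allocation_bottom_heavy (N : ℝ) (hN : 0 < N) (k : ℕ) (hk : 1 ≤ k)
    (Ni : Fin k → ℝ) (hNi : ∀ i, 0 ≤ Ni i) (hsum : ∑ i, Ni i = N)
    (εTotal ε₁ ε₂ : ℝ) (hε₁ : 0 < ε₁) (hε₂ : 0 < ε₂) (hbudget : ε₁ + ε₂ = εTotal)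
    (hopt : ∀ ε₁' ε₂' : ℝ, 0 < ε₁' → 0 < ε₂' → ε₁' + ε₂' = εTotal →
      fMSE ε₁ N + ∑ i, fMSE ε₂ (Ni i) ≤ fMSE ε₁' N + ∑ i, fMSE ε₂' (Ni i)) :
    ε₁ ≤ ε₂ :=
  optimal_allocation_bottom_heavy_general N k hk Ni hNi hsum εTotal ε₁ ε₂ hε₁ hε₂ hbudget hopt
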